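/- arXiv:1006.2048 — 5 statements merged into one kernel-verified Lean document; each statement's English description precedes it below -/
import Mathlib

section
/- Let w_1,…,w_N > 0 and p ∈ (0,1). If every node t uses attempt probability p_t = w_t·p / (1 + (w_t − 1)·p), then node t's throughput equals S_t(p) = (w_t / ∑_{i=1}^N w_i) · S(p, W), where S(p, W) is the total system throughput; in particular the throughput received by each node is proportional to its weight and ∑_t S_t(p) = S(p, W). -/
open Finset

/-- Throughput of node `t` in the fully connected `p`-persistent CSMA model. -/
noncomputable def nodeThroughput (N : ℕ) (EP σ Ts Tc : ℝ) (p : Fin N → ℝ) (t : Fin N) : ℝ :=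
  (p t / (1 - p t)) * (EP * (∏ i, (1 - p i))) /
    ((∏ i, (1 - p i)) * σ + (∑ i, p i / (1 - p i)) * (∏ i, (1 - p i)) * (Ts - Tc)
      + (1 - ∏ i, (1 - p i)) * Tc)

/-- Weighted attempt probability `p_t = w_t p / (1 + (w_t - 1) p)`. -/
noncomputable def wAttempt (w p : ℝ) : ℝ := w * p / (1 + (w - 1) * p)

/-- `P_I(p) = ∏ (1-p)/(1+(w_i-1) p)` for the weighted `p`-persistent scheme. -/
noncomputable def PIw (N : ℕ) (w : Fin N → ℝ) (p : ℝ) : ℝ :=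
  ∏ i, (1 - p) / (1 + (w i - 1) * p)

/-- `P_T(p) = (p/(1-p)) ∑ w_i` for the weighted `p`-persistent scheme. -/
noncomputable def PTw (N : ℕ) (w : Fin N → ℝ) (p : ℝ) : ℝ :=
  (p / (1 - p)) * ∑ i, w i

/-- System throughput `S(p, W)` of the weighted `p`-persistent scheme. -/
noncomputable def Ssys (N : ℕ) (EP σ Ts Tc : ℝ) (w : Fin N → ℝ) (p : ℝ) : ℝ :=
  EP * PTw N w p * PIw N w p /
    (PIw N w p * σ + PTw N w p * PIw N w p * (Ts - Tc) + (1 - PIw N w p) * Tc)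

/-!
With `p_t = w_t p / (1 + (w_t - 1) p)` the attempt odds are `p_t / (1 - p_t) = w_t · p / (1 - p)`
and `1 - p_t = (1 - p) / (1 + (w_t - 1) p)`, so the idle probability and the total odds of the
node model are exactly `P_I(p)` and `P_T(p)`. Node `t`'s throughput is its odds times the factor
`E_P P_I / (expected slot length)`, common to all nodes, while `S(p, W)` is `P_T` times the same
factor; since the odds are proportional to the weights and add up to `P_T`, the claim follows.
-/

lemma one_add_sub_one_mul_pos {w p : ℝ} (hw : 0 < w) (hp : p ∈ Set.Icc (0 : ℝ) 1) :
    0 < 1 + (w - 1) * p := by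
  obtain ⟨hp0, hp1⟩ := hp
  rcases hp0.eq_or_lt with rfl | hp0
  · norm_num
  · nlinarith [mul_pos hw hp0]

lemma one_sub_wAttempt {w p : ℝ} (h : 1 + (w - 1) * p ≠ 0) :
    1 - wAttempt w p = (1 - p) / (1 + (w - 1) * p) := by
  rw [wAttempt, eq_div_iff h, sub_mul, div_mul_cancel₀ _ h]
  ring

lemma wAttempt_div_one_sub_wAttempt {w p : ℝ} (h : 1 + (w - 1) * p ≠ 0) :
    wAttempt w p / (1 - wAttempt w p) = w * (p / (1 - p)) := by
  rw [one_sub_wAttempt h, wAttempt, div_div_div_eq, mul_comm (1 + (w - 1) * p) (1 - p),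
    mul_div_mul_right _ _ h, mul_div_assoc]

section Weighted

variable {N : ℕ} {w : Fin N → ℝ} {p : ℝ}

lemma prod_one_sub_wAttempt (h : ∀ i, 1 + (w i - 1) * p ≠ 0) :
    ∏ i, (1 - wAttempt (w i) p) = PIw N w p :=
  prod_congr rfl fun i _ => one_sub_wAttempt (h i)

lemma sum_wAttempt_div_one_sub_wAttempt (h : ∀ i, 1 + (w i - 1) * p ≠ 0) :
    ∑ i, wAttempt (w i) p / (1 - wAttempt (w i) p) = PTw N w p := by
  simp_rw [wAttempt_div_one_sub_wAttempt (h _), PTw, ← sum_mul, mul_comm]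

noncomputable def throughputPerOdds (N : ℕ) (EP σ Ts Tc : ℝ) (w : Fin N → ℝ) (p : ℝ) : ℝ :=
  EP * PIw N w p /
    (PIw N w p * σ + PTw N w p * PIw N w p * (Ts - Tc) + (1 - PIw N w p) * Tc)

lemma Ssys_eq_PTw_mul_throughputPerOdds (EP σ Ts Tc : ℝ) :
    Ssys N EP σ Ts Tc w p = PTw N w p * throughputPerOdds N EP σ Ts Tc w p := by
  rw [Ssys, throughputPerOdds]
  ring

lemma nodeThroughput_wAttempt (EP σ Ts Tc : ℝ) (hw : ∀ i, 0 < w i)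
    (hp : p ∈ Set.Icc (0 : ℝ) 1) (t : Fin N) :
    nodeThroughput N EP σ Ts Tc (fun i => wAttempt (w i) p) t
      = w t * (p / (1 - p)) * throughputPerOdds N EP σ Ts Tc w p := by
  have hden : ∀ i, 1 + (w i - 1) * p ≠ 0 :=
    fun i => (one_add_sub_one_mul_pos (hw i) hp).ne'
  rw [nodeThroughput, prod_one_sub_wAttempt hden, sum_wAttempt_div_one_sub_wAttempt hden,
    wAttempt_div_one_sub_wAttempt (hden t), throughputPerOdds, mul_div_assoc]

end Weighted

theorem weighted_fair_allocation_general (N : ℕ) (EP σ Ts Tc : ℝ)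
    (w : Fin N → ℝ) (hw : ∀ i, 0 < w i)
    (p : ℝ) (hp : p ∈ Set.Ioo (0 : ℝ) 1) :
    (∀ t, nodeThroughput N EP σ Ts Tc (fun i => wAttempt (w i) p) t
        = (w t / ∑ i, w i) * Ssys N EP σ Ts Tc w p) ∧
    (∑ t, nodeThroughput N EP σ Ts Tc (fun i => wAttempt (w i) p) t
        = Ssys N EP σ Ts Tc w p) := by
  simp_rw [nodeThroughput_wAttempt EP σ Ts Tc hw (Set.Ioo_subset_Icc_self hp),
    Ssys_eq_PTw_mul_throughputPerOdds, PTw]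
  refine ⟨fun t => ?_, ?_⟩
  · have hW : ∑ i, w i ≠ 0 := (sum_pos (fun i _ => hw i) ⟨t, mem_univ t⟩).ne'
    field_simp
  · rw [← sum_mul, ← sum_mul]
    ring

/-- If every node `t` uses attempt probability `w_t p / (1 + (w_t - 1) p)`, then node `t`'s
throughput equals `(w_t / ∑ w_i) · S(p, W)`; in particular each node's throughput is
proportional to its weight and the node throughputs sum to the system throughput. -/
theorem weighted_fair_allocation (N : ℕ) (EP σ Ts Tc : ℝ)
    (hEP : 0 < EP) (hσ : 0 < σ) (hTc : σ ≤ Tc) (hTs : Tc ≤ Ts)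
    (w : Fin N → ℝ) (hw : ∀ i, 0 < w i)
    (p : ℝ) (hp : p ∈ Set.Ioo (0 : ℝ) 1) :
    (∀ t, nodeThroughput N EP σ Ts Tc (fun i => wAttempt (w i) p) t
        = (w t / ∑ i, w i) * Ssys N EP σ Ts Tc w p) ∧
    (∑ t, nodeThroughput N EP σ Ts Tc (fun i => wAttempt (w i) p) t
        = Ssys N EP σ Ts Tc w p) :=
  weighted_fair_allocation_general N EP σ Ts Tc w hw p hp
end

section
/- Suppose N ≥ 2 and w_1,…,w_N > 0. Then the system throughput p ↦ S(p, W) is strictly quasi-concave on (0,1): there exists a unique p* ∈ (0,1) such that S(·, W) is strictly increasing on (0, p*) and strictly decreasing on (p*, 1). -/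
/-!
In the odds variable `x = p / (1 - p)` one has `P_I = 1 / R(x)` with `R(x) = ∏ (1 + w_i x)` and
`P_T = x ∑ w_i`, so `S = E_P / (T_s - T_c + F(x) / (x ∑ w_i))` with `F(x) = σ + T_c (R(x) - 1)`.
For `N ≥ 2`, `F'' = T_c R ((∑ b_i)² - ∑ b_i²) > 0` on `(0, ∞)`, where `b_i = w_i / (1 + w_i x)`.
Hence the numerator `x F'(x) - F(x)` of `(F(x) / x)'` increases strictly from `-σ < 0`; it is
positive at `x = ∑ 1 / w_i`, and its unique zero `c` gives the maximiser `p* = c / (1 + c)`.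
-/

open Finset

/-- `f(p, W) = T_c^* (1 - ∑ p_i(p) - P_I(p)) + P_I(p)`, with `T_c^* = T_c/σ`. -/
noncomputable def fW (N : ℕ) (σ Tc : ℝ) (w : Fin N → ℝ) (p : ℝ) : ℝ :=
  (Tc / σ) * (1 - (∑ i, wAttempt (w i) p) - PIw N w p) + PIw N w p

open Set

theorem not_lt_of_strictMonoOn_Ioo_of_strictAntiOn_Ioo {α β : Type*} [LinearOrder α]
    [DenselyOrdered α] [Preorder β] {f : α → β} {a b p q : α} (hap : a ≤ p) (hqb : q ≤ b)
    (hmono : StrictMonoOn f (Ioo a q)) (hanti : StrictAntiOn f (Ioo p b)) : ¬p < q := by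
  intro hpq
  obtain ⟨u, hpu, huq⟩ := exists_between hpq
  obtain ⟨v, huv, hvq⟩ := exists_between huq
  exact lt_asymm (hmono ⟨hap.trans_lt hpu, huq⟩ ⟨hap.trans_lt (hpu.trans huv), hvq⟩ huv)
    (hanti ⟨hpu, huq.trans_le hqb⟩ ⟨hpu.trans huv, hvq.trans_le hqb⟩ huv)

theorem sum_sq_lt_sq_sum {ι R : Type*} [Semiring R] [PartialOrder R] [IsStrictOrderedRing R]
    {s : Finset ι} {b : ι → R} (hs : 1 < #s) (hb : ∀ i ∈ s, 0 < b i) :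
    ∑ i ∈ s, b i ^ 2 < (∑ i ∈ s, b i) ^ 2 := by
  classical
  rw [sq, sum_mul]
  refine sum_lt_sum_of_nonempty (card_pos.1 (by omega)) fun i hi => ?_
  have hrest : 0 < ∑ j ∈ s.erase i, b j :=
    sum_pos (fun j hj => hb j (mem_of_mem_erase hj))
      (card_pos.1 (by rw [card_erase_of_mem hi]; omega))
  rw [sq, ← add_sum_erase s b hi, mul_add]
  exact lt_add_of_pos_right _ (mul_pos (hb i hi) hrest)

section Valley

variable {F F' F'' : ℝ → ℝ}

theorem strictMonoOn_mul_deriv_sub (hF : ∀ x ∈ Ici (0 : ℝ), HasDerivAt F (F' x) x)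
    (hF' : ∀ x ∈ Ici (0 : ℝ), HasDerivAt F' (F'' x) x) (hF'' : ∀ x ∈ Ioi (0 : ℝ), 0 < F'' x) :
    StrictMonoOn (fun x => x * F' x - F x) (Ici 0) := by
  have hderiv : ∀ x ∈ Ici (0 : ℝ), HasDerivAt (fun x => x * F' x - F x) (x * F'' x) x :=
    fun x hx =>
      (((hasDerivAt_id' x).fun_mul (hF' x hx)).fun_sub (hF x hx)).congr_deriv (by ring)
  refine strictMonoOn_of_deriv_pos (convex_Ici 0)
    (fun x hx => (hderiv x hx).continuousAt.continuousWithinAt) fun x hx => ?_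
  rw [interior_Ici] at hx
  rw [(hderiv x (mem_Ici.2 hx.le)).deriv]
  exact mul_pos hx (hF'' x hx)

theorem exists_strictAntiOn_strictMonoOn_div_self {a : ℝ} (ha : 0 ≤ a)
    (hF : ∀ x ∈ Ici (0 : ℝ), HasDerivAt F (F' x) x)
    (hF' : ∀ x ∈ Ici (0 : ℝ), HasDerivAt F' (F'' x) x) (hF'' : ∀ x ∈ Ioi (0 : ℝ), 0 < F'' x)
    (hF0 : 0 < F 0) (hFa : F a < a * F' a) :
    ∃ c > 0, StrictAntiOn (fun x => F x / x) (Ioo 0 c) ∧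
      StrictMonoOn (fun x => F x / x) (Ioi c) := by
  set φ := fun x => x * F' x - F x
  have hφ : StrictMonoOn φ (Ici 0) := strictMonoOn_mul_deriv_sub hF hF' hF''
  have hcont : ContinuousOn φ (Icc 0 a) := fun x hx =>
    (continuousAt_id.mul (hF' x hx.1).continuousAt |>.sub (hF x hx.1).continuousAt)
      |>.continuousWithinAt
  obtain ⟨c, ⟨hc0, -⟩, hφc⟩ := intermediate_value_Ioo ha hcont
    (show (0 : ℝ) ∈ Ioo (φ 0) (φ a) from ⟨by simpa [φ] using hF0, by simpa [φ] using hFa⟩)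
  have hderiv : ∀ x > 0, HasDerivAt (fun x => F x / x) (φ x / x ^ 2) x := fun x hx =>
    ((hF x hx.le).fun_div (hasDerivAt_id' x) hx.ne').congr_deriv (by ring)
  refine ⟨c, hc0, strictAntiOn_of_deriv_neg (convex_Ioo 0 c)
    (fun x hx => (hderiv x hx.1).continuousAt.continuousWithinAt) fun x hx => ?_,
    strictMonoOn_of_deriv_pos (convex_Ioi c)
    (fun x hx => (hderiv x (hc0.trans hx)).continuousAt.continuousWithinAt) fun x hx => ?_⟩
  · rw [interior_Ioo] at hx
    rw [(hderiv x hx.1).deriv]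
    have : φ x < φ c := hφ (mem_Ici.2 hx.1.le) (mem_Ici.2 hc0.le) hx.2
    exact div_neg_of_neg_of_pos (hφc ▸ this) (pow_pos hx.1 2)
  · rw [interior_Ioi] at hx
    have hx0 : 0 < x := hc0.trans hx
    rw [(hderiv x hx0).deriv]
    have : φ c < φ x := hφ (mem_Ici.2 hc0.le) (mem_Ici.2 hx0.le) hx
    exact div_pos (hφc ▸ this) (pow_pos hx0 2)

end Valley

section ProdAffine

variable {ι : Type*} [Fintype ι] {w : ι → ℝ} {x : ℝ}

noncomputable def prodAffine (w : ι → ℝ) (x : ℝ) : ℝ := ∏ i, (1 + w i * x)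

theorem one_le_prodAffine (hw : ∀ i, 0 ≤ w i) (hx : 0 ≤ x) : 1 ≤ prodAffine w x :=
  Finset.one_le_prod fun i _ => le_add_of_nonneg_right (mul_nonneg (hw i) hx)

theorem hasDerivAt_prodAffine (hx : ∀ i, 1 + w i * x ≠ 0) :
    HasDerivAt (prodAffine w) (prodAffine w x * ∑ i, w i / (1 + w i * x)) x := by
  classical
  have h := HasDerivAt.fun_finsetProd (u := univ) fun i _ =>
    (((hasDerivAt_id' x).const_mul (w i)).const_add 1).congr_deriv (mul_one (w i))
  refine h.congr_deriv ?_
  rw [mul_sum]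
  refine sum_congr rfl fun i _ => ?_
  rw [prodAffine, ← mul_prod_erase univ _ (mem_univ i), smul_eq_mul, mul_comm (1 + w i * x),
    mul_assoc, mul_div_cancel₀ _ (hx i)]

theorem hasDerivAt_sum_div_one_add_mul (hx : ∀ i, 1 + w i * x ≠ 0) :
    HasDerivAt (fun x => ∑ i, w i / (1 + w i * x)) (-∑ i, (w i / (1 + w i * x)) ^ 2) x := by
  rw [← sum_neg_distrib]
  refine HasDerivAt.fun_sum fun i _ => ?_
  refine ((hasDerivAt_const x (w i)).fun_div
    ((((hasDerivAt_id' x).const_mul (w i)).const_add 1)) (hx i)).congr_deriv ?_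
  rw [div_pow]
  ring

theorem one_lt_mul_sum_div_one_add_mul (hw : ∀ i, 0 < w i) (hcard : 1 < Fintype.card ι) :
    1 < (∑ i, (w i)⁻¹) * ∑ i, w i / (1 + w i * ∑ j, (w j)⁻¹) := by
  set a := ∑ j, (w j)⁻¹
  have hne : (univ : Finset ι).Nonempty :=
    univ_nonempty_iff.2 (Fintype.card_pos_iff.1 (by omega))
  have ha : 0 < a := sum_pos (fun i _ => inv_pos.2 (hw i)) hne
  have hterm : ∀ i, a * (w i / (1 + w i * a)) = 1 - 1 / (1 + w i * a) := fun i => by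
    have : 1 + w i * a ≠ 0 := by have := hw i; positivity
    rw [eq_sub_iff_add_eq, mul_div_assoc', ← add_div, div_eq_one_iff_eq this]
    ring
  have hsmall : ∑ i, 1 / (1 + w i * a) < 1 := calc
    ∑ i, 1 / (1 + w i * a) < ∑ i, 1 / (w i * a) :=
      sum_lt_sum_of_nonempty hne fun i _ =>
        one_div_lt_one_div_of_lt (mul_pos (hw i) ha) (lt_one_add _)
    _ = 1 := by
      simp_rw [one_div, mul_inv, ← sum_mul]
      exact mul_inv_cancel₀ ha.ne'
  have hcard' : (2 : ℝ) ≤ Fintype.card ι := by exact_mod_cast hcard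
  rw [mul_sum, sum_congr rfl fun i _ => hterm i, sum_sub_distrib, sum_const, card_univ,
    nsmul_eq_mul, mul_one]
  linarith

noncomputable def slotOverhead (σ Tc : ℝ) (w : ι → ℝ) (x : ℝ) : ℝ :=
  σ + Tc * (prodAffine w x - 1)

theorem slotOverhead_pos {σ Tc : ℝ} (hσ : 0 < σ) (hTc : 0 ≤ Tc) (hw : ∀ i, 0 ≤ w i)
    (hx : 0 ≤ x) : 0 < slotOverhead σ Tc w x := by
  have := one_le_prodAffine hw hx
  unfold slotOverhead
  positivity

theorem exists_strictAntiOn_strictMonoOn_slotOverhead_div {σ Tc : ℝ} (hσ : 0 < σ)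
    (hTc : σ ≤ Tc) (hw : ∀ i, 0 < w i) (hcard : 1 < Fintype.card ι) :
    ∃ c > 0, StrictAntiOn (fun x => slotOverhead σ Tc w x / x) (Ioo 0 c) ∧
      StrictMonoOn (fun x => slotOverhead σ Tc w x / x) (Ioi c) := by
  have hTc0 : 0 < Tc := hσ.trans_le hTc
  have hR : ∀ x ∈ Ici (0 : ℝ), 1 ≤ prodAffine w x := fun x hx =>
    one_le_prodAffine (fun i => (hw i).le) hx
  have hne : ∀ x ∈ Ici (0 : ℝ), ∀ i, 1 + w i * x ≠ 0 := fun x hx i => by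
    have := hw i; have : 0 ≤ x := hx; positivity
  set B := fun x => ∑ i, w i / (1 + w i * x)
  set a := ∑ i, (w i)⁻¹
  have ha : 0 ≤ a := sum_nonneg fun i _ => (inv_pos.2 (hw i)).le
  refine exists_strictAntiOn_strictMonoOn_div_self (a := a)
    (F' := fun x => Tc * (prodAffine w x * B x))
    (F'' := fun x => Tc * (prodAffine w x * (B x ^ 2 - ∑ i, (w i / (1 + w i * x)) ^ 2)))
    ha (fun x hx => ?_) (fun x hx => ?_) (fun x hx => ?_) ?_ ?_
  · exact (((hasDerivAt_prodAffine (hne x hx)).sub_const 1).const_mul Tc).const_add σ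
  · exact (((hasDerivAt_prodAffine (hne x hx)).mul
      (hasDerivAt_sum_div_one_add_mul (hne x hx))).const_mul Tc).congr_deriv (by ring)
  · have hx : 0 < x := hx
    refine mul_pos hTc0 (mul_pos (zero_lt_one.trans_le (hR x hx.le)) (sub_pos.2 ?_))
    exact sum_sq_lt_sq_sum (by simpa using hcard) fun i _ => by have := hw i; positivity
  · simpa [slotOverhead, prodAffine] using hσ
  · have haB : 1 < a * B a := one_lt_mul_sum_div_one_add_mul hw hcard
    have hRa := hR a ha
    simp only [slotOverhead]
    nlinarith [mul_pos hTc0 (sub_pos.2 haB)]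

end ProdAffine

theorem PIw_eq_inv_prodAffine {N : ℕ} {w : Fin N → ℝ} {p : ℝ} (hp : p ≠ 1) :
    PIw N w p = (prodAffine w (p / (1 - p)))⁻¹ := by
  have h1p : 1 - p ≠ 0 := sub_ne_zero.2 hp.symm
  rw [PIw, prodAffine, ← prod_inv_distrib]
  refine prod_congr rfl fun i _ => ?_
  rw [← inv_div]
  congr 1
  field_simp
  ring

theorem Ssys_eq_div_slotOverhead {N : ℕ} {EP σ Ts Tc : ℝ} {w : Fin N → ℝ} {p : ℝ}
    (hw : ∀ i, 0 ≤ w i) (hW : ∑ i, w i ≠ 0) (hp0 : 0 < p) (hp1 : p < 1) :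
    Ssys N EP σ Ts Tc w p =
      EP / (Ts - Tc + slotOverhead σ Tc w (p / (1 - p)) / (p / (1 - p)) / ∑ i, w i) := by
  have hx : 0 < p / (1 - p) := div_pos hp0 (sub_pos.2 hp1)
  have hR : prodAffine w (p / (1 - p)) ≠ 0 :=
    (zero_lt_one.trans_le (one_le_prodAffine hw hx.le)).ne'
  rw [Ssys, PTw, PIw_eq_inv_prodAffine hp1.ne, slotOverhead]
  generalize p / (1 - p) = x at hx hR ⊢
  field_simp
  ring

theorem strictMonoOn_odds : StrictMonoOn (fun p : ℝ => p / (1 - p)) (Iio 1) := by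
  intro a ha b hb hab
  have ha' : 0 < 1 - a := sub_pos.2 ha
  have hb' : 0 < 1 - b := sub_pos.2 hb
  rw [div_lt_div_iff₀ ha' hb']
  nlinarith

theorem strictMonoOn_strictAntiOn_comp_odds {k G : ℝ → ℝ} {c : ℝ} {t : Set ℝ} (hc : 0 < c)
    (hk : MapsTo k (Ioi 0) t) (hG : StrictAntiOn G t) (hanti : StrictAntiOn k (Ioo 0 c))
    (hmono : StrictMonoOn k (Ioi c)) :
    StrictMonoOn (fun p => G (k (p / (1 - p)))) (Ioo 0 (c / (1 + c))) ∧
      StrictAntiOn (fun p => G (k (p / (1 - p)))) (Ioo (c / (1 + c)) 1) := by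
  have hc1 : c / (1 + c) < 1 := (div_lt_one (by linarith)).2 (by linarith)
  have hodds_c : c / (1 + c) / (1 - c / (1 + c)) = c := by
    field_simp
    ring
  have hodds_pos : MapsTo (fun p : ℝ => p / (1 - p)) (Ioo 0 1) (Ioi 0) := fun p hp =>
    div_pos hp.1 (sub_pos.2 hp.2)
  constructor
  · refine ((hG.comp hanti (hk.mono_left Ioo_subset_Ioi_self)).comp
      (strictMonoOn_odds.mono fun p hp => hp.2.trans hc1) fun p hp => ⟨?_, ?_⟩)
    · exact hodds_pos ⟨hp.1, hp.2.trans hc1⟩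
    · exact hodds_c ▸ strictMonoOn_odds (hp.2.trans hc1) hc1 hp.2
  · refine ((hG.comp_strictMonoOn hmono (hk.mono_left (Ioi_subset_Ioi hc.le))).comp_strictMonoOn
      (strictMonoOn_odds.mono fun p hp => hp.2) fun p hp => ?_)
    exact hodds_c ▸ strictMonoOn_odds hc1 hp.2 hp.1

/-- The system throughput `p ↦ S(p, W)` is strictly quasi-concave on `(0,1)`: there is a
unique `p* ∈ (0,1)` such that `S(·, W)` is strictly increasing on `(0, p*)` and strictly
decreasing on `(p*, 1)`. -/
theorem Ssys_strict_quasiconcave (N : ℕ) (hN : 2 ≤ N) (EP σ Ts Tc : ℝ)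
    (hEP : 0 < EP) (hσ : 0 < σ) (hTc : σ ≤ Tc) (hTs : Tc ≤ Ts)
    (w : Fin N → ℝ) (hw : ∀ i, 0 < w i) :
    ∃! pstar : ℝ, pstar ∈ Set.Ioo (0 : ℝ) 1 ∧
      StrictMonoOn (Ssys N EP σ Ts Tc w) (Set.Ioo 0 pstar) ∧
      StrictAntiOn (Ssys N EP σ Ts Tc w) (Set.Ioo pstar 1) := by
  have hW : 0 < ∑ i, w i := sum_pos (fun i _ => hw i) (univ_nonempty_iff.2 ⟨⟨0, by omega⟩⟩)
  obtain ⟨c, hc, hanti, hmono⟩ :=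
    exists_strictAntiOn_strictMonoOn_slotOverhead_div hσ hTc hw (by rw [Fintype.card_fin]; omega)
  have hG : StrictAntiOn (fun t => EP / (Ts - Tc + t / ∑ i, w i)) (Ioi 0) :=
    fun s (hs : 0 < s) t _ hst => by
      dsimp only
      gcongr
  have hk : MapsTo (fun x => slotOverhead σ Tc w x / x) (Ioi 0) (Ioi 0) := fun x hx =>
    div_pos (slotOverhead_pos hσ (hσ.le.trans hTc) (fun i => (hw i).le) (le_of_lt hx)) hx
  obtain ⟨hSmono, hSanti⟩ := strictMonoOn_strictAntiOn_comp_odds hc hk hG hanti hmono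
  have hS : EqOn (Ssys N EP σ Ts Tc w)
      (fun p => EP / (Ts - Tc + slotOverhead σ Tc w (p / (1 - p)) / (p / (1 - p)) / ∑ i, w i))
      (Ioo 0 1) := fun p hp => Ssys_eq_div_slotOverhead (fun i => (hw i).le) hW.ne' hp.1 hp.2
  have hc0 : 0 < c / (1 + c) := div_pos hc (by linarith)
  have hc1 : c / (1 + c) < 1 := (div_lt_one (by linarith)).2 (by linarith)
  have hSmono' := hSmono.congr (hS.symm.mono (Ioo_subset_Ioo_right hc1.le))
  have hSanti' := hSanti.congr (hS.symm.mono (Ioo_subset_Ioo_left hc0.le))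
  refine ⟨c / (1 + c), ⟨⟨hc0, hc1⟩, hSmono', hSanti'⟩, fun q ⟨hq, hqmono, hqanti⟩ => ?_⟩
  exact le_antisymm
    (not_lt.1 (not_lt_of_strictMonoOn_Ioo_of_strictAntiOn_Ioo hc0.le hq.2.le hqmono hSanti'))
    (not_lt.1 (not_lt_of_strictMonoOn_Ioo_of_strictAntiOn_Ioo hq.1.le hc1.le hSmono' hqanti))
end

section
/- Let N ≥ 2 be an integer and let g : [0,1] → [0,1] be continuous and nonincreasing. Then there exists a unique τ ∈ [0,1] satisfying the fixed-point equation τ = g(1 − (1 − τ)^{N−1}). -/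
/-!
The collision probability `c(τ) = 1 - (1 - τ)^(N-1)` sends `[0,1]` monotonically into itself, so
`g ∘ c` is a continuous, nonincreasing self-map of `[0,1]`. It has a fixed point by the
intermediate value theorem, and at most one because two fixed points `x < y` of a
nonincreasing map would give `y = f y ≤ f x = x`.
-/

open Set Function

theorem AntitoneOn.eq_of_isFixedPt {α : Type*} [LinearOrder α] {f : α → α} {s : Set α}
    (hf : AntitoneOn f s) {x y : α} (hx : x ∈ s) (hy : y ∈ s)
    (hfx : IsFixedPt f x) (hfy : IsFixedPt f y) : x = y := by
  rcases le_total x y with hxy | hyx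
  · have hyx := hf hx hy hxy
    rw [hfx.eq, hfy.eq] at hyx
    exact le_antisymm hxy hyx
  · have hxy := hf hy hx hyx
    rw [hfx.eq, hfy.eq] at hxy
    exact le_antisymm hxy hyx

theorem existsUnique_mem_Icc_isFixedPt_of_antitoneOn {α : Type*}
    [ConditionallyCompleteLinearOrder α] [TopologicalSpace α] [OrderTopology α]
    [DenselyOrdered α] {a b : α} {f : α → α} (hle : a ≤ b) (hf : ContinuousOn f (Icc a b))
    (hanti : AntitoneOn f (Icc a b)) (hmaps : MapsTo f (Icc a b) (Icc a b)) :
    ∃! c, c ∈ Icc a b ∧ IsFixedPt f c := by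
  obtain ⟨c, hc, hfc⟩ := exists_mem_Icc_isFixedPt_of_mapsTo hf hle hmaps
  exact ⟨c, ⟨hc, hfc⟩, fun d ⟨hd, hfd⟩ => hanti.eq_of_isFixedPt hd hc hfd hfc⟩

def collisionProb (n : ℕ) (τ : ℝ) : ℝ := 1 - (1 - τ) ^ n

theorem continuous_collisionProb (n : ℕ) : Continuous (collisionProb n) := by
  unfold collisionProb
  fun_prop

theorem mapsTo_collisionProb (n : ℕ) : MapsTo (collisionProb n) (Icc 0 1) (Icc 0 1) := by
  rintro τ ⟨h0, h1⟩
  have hle : (1 - τ) ^ n ≤ 1 := pow_le_one₀ (by linarith) (by linarith)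
  have hnonneg : 0 ≤ (1 - τ) ^ n := pow_nonneg (by linarith) n
  exact ⟨by unfold collisionProb; linarith, by unfold collisionProb; linarith⟩

theorem monotoneOn_collisionProb (n : ℕ) : MonotoneOn (collisionProb n) (Icc 0 1) := by
  intro a _ b hb hab
  have : (1 - b) ^ n ≤ (1 - a) ^ n := pow_le_pow_left₀ (by linarith [hb.2]) (by linarith) n
  unfold collisionProb
  linarith

theorem fixed_point_exists_unique_general (N : ℕ) (g : ℝ → ℝ)
    (hcont : ContinuousOn g (Set.Icc 0 1))
    (hanti : AntitoneOn g (Set.Icc 0 1))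
    (hmaps : Set.MapsTo g (Set.Icc 0 1) (Set.Icc 0 1)) :
    ∃! τ : ℝ, τ ∈ Set.Icc (0 : ℝ) 1 ∧ τ = g (1 - (1 - τ) ^ (N - 1)) := by
  have hc := mapsTo_collisionProb (N - 1)
  have := existsUnique_mem_Icc_isFixedPt_of_antitoneOn zero_le_one
    (hcont.comp (continuous_collisionProb (N - 1)).continuousOn hc)
    (hanti.comp_MonotoneOn (monotoneOn_collisionProb (N - 1)) hc) (hmaps.comp hc)
  simpa only [IsFixedPt, comp_apply, collisionProb, eq_comm] using this

/-- Fixed-point equation for the attempt probability: if `g : [0,1] → [0,1]` is continuous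
and nonincreasing, then there is a unique `τ ∈ [0,1]` with
`τ = g (1 - (1 - τ)^(N-1))`. -/
theorem fixed_point_exists_unique (N : ℕ) (hN : 2 ≤ N) (g : ℝ → ℝ)
    (hcont : ContinuousOn g (Set.Icc 0 1))
    (hanti : AntitoneOn g (Set.Icc 0 1))
    (hmaps : Set.MapsTo g (Set.Icc 0 1) (Set.Icc 0 1)) :
    ∃! τ : ℝ, τ ∈ Set.Icc (0 : ℝ) 1 ∧ τ = g (1 - (1 - τ) ^ (N - 1)) :=
  fixed_point_exists_unique_general N g hcont hanti hmaps
end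

section
/- Fix j ∈ {0,…,m−1} and c ∈ [0,1). Then the map p_0 ↦ τ_c(j;p_0) is strictly increasing on [0,1]. -/
open Finset

/-- `α_j(c) = (1-c) ∑_{i=j}^m 2^i c^{i-j} + 2^m c^{m-j}`. -/
noncomputable def alphaB (m j : ℕ) (c : ℝ) : ℝ :=
  (1 - c) * ∑ i ∈ Finset.Icc j m, (2 : ℝ) ^ i * c ^ (i - j) + (2 : ℝ) ^ m * c ^ (m - j)

/-- `κ_0 = 2 / CW_min`. -/
noncomputable def kappa0 (CWmin : ℕ) : ℝ := 2 / (CWmin : ℝ)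

/-- A reset distribution `q = (q_0, …, q_m)`. -/
def IsResetDist (m : ℕ) (q : Fin (m + 1) → ℝ) : Prop :=
  (∀ j, 0 ≤ q j) ∧ (∑ j, q j) = 1

/-- Conditional attempt probability `τ̂_c(q) = κ_0 / ∑_j q_j α_j(c)`. -/
noncomputable def tauHatC (m CWmin : ℕ) (q : Fin (m + 1) → ℝ) (c : ℝ) : ℝ :=
  kappa0 CWmin / ∑ j : Fin (m + 1), q j * alphaB m (j : ℕ) c

/-- RandomReset(j; p₀) conditional attempt probability
`τ_c(j;p₀) = κ_0 / (p₀ α_j(c) + ((1-p₀)/(m-j)) ∑_{i=j+1}^m α_i(c))`. -/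
noncomputable def tauRRC (m CWmin : ℕ) (j : ℕ) (p0 c : ℝ) : ℝ :=
  kappa0 CWmin /
    (p0 * alphaB m j c + ((1 - p0) / ((m : ℝ) - (j : ℝ))) * ∑ i ∈ Finset.Icc (j + 1) m, alphaB m i c)

/-- `τ ∈ [0,1]` is the fixed-point attempt probability `τ̂(q)` of the reset distribution `q`
for `N` nodes: `τ = τ̂_{1-(1-τ)^(N-1)}(q)`. -/
def IsFixedPointQ (m CWmin N : ℕ) (q : Fin (m + 1) → ℝ) (τ : ℝ) : Prop :=
  τ ∈ Set.Icc (0 : ℝ) 1 ∧ τ = tauHatC m CWmin q (1 - (1 - τ) ^ (N - 1))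

/-- `τ ∈ [0,1]` is the fixed-point attempt probability `τ(j;p₀)` of the RandomReset(j;p₀)
policy for `N` nodes: `τ = τ_{1-(1-τ)^(N-1)}(j;p₀)`. -/
def IsFixedPointRR (m CWmin N : ℕ) (j : ℕ) (p0 τ : ℝ) : Prop :=
  τ ∈ Set.Icc (0 : ℝ) 1 ∧ τ = tauRRC m CWmin j p0 (1 - (1 - τ) ^ (N - 1))

/-! The denominator of `τ_c(j;p₀)` is the convex combination `p₀ α_j + (1 - p₀) ᾱ`, where `ᾱ` is
the average of `α_{j+1}, …, α_m`. The recursion `α_j = (1 - c) 2^j + c α_{j+1}` and the bound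
`2^j ≤ α_j` make `α` strictly increasing in `j` when `c < 1`, so `0 < α_j < ᾱ`: the denominator is
positive and strictly decreasing in `p₀`. -/

namespace alphaB

variable {m : ℕ} {c : ℝ}

lemma self : alphaB m m c = 2 ^ m * (2 - c) := by
  simp only [alphaB, Finset.Icc_self, Finset.sum_singleton, Nat.sub_self, pow_zero]
  ring

lemma eq_add_mul_succ {j : ℕ} (hj : j < m) :
    alphaB m j c = (1 - c) * 2 ^ j + c * alphaB m (j + 1) c := by
  have hIcc : Finset.Icc j m = insert j (Finset.Icc (j + 1) m) := by
    ext x; simp only [Finset.mem_Icc, Finset.mem_insert]; omega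
  have hshift : ∑ i ∈ Finset.Icc (j + 1) m, (2 : ℝ) ^ i * c ^ (i - j)
      = c * ∑ i ∈ Finset.Icc (j + 1) m, (2 : ℝ) ^ i * c ^ (i - (j + 1)) := by
    rw [Finset.mul_sum]
    refine Finset.sum_congr rfl fun i hi => ?_
    rw [show i - j = i - (j + 1) + 1 by grind, pow_succ]
    ring
  rw [alphaB, alphaB, hIcc, Finset.sum_insert (by simp), hshift,
    show m - j = m - (j + 1) + 1 by omega, pow_succ, Nat.sub_self, pow_zero]
  ring

lemma two_pow_le (hc₀ : 0 ≤ c) (hc₁ : c ≤ 1) {j : ℕ} (hj : j ≤ m) :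
    (2 : ℝ) ^ j ≤ alphaB m j c := by
  induction hj using Nat.decreasingInduction with
  | self => rw [self]; nlinarith [pow_pos (two_pos (α := ℝ)) m]
  | of_succ k hk ih =>
    rw [eq_add_mul_succ hk]
    nlinarith [pow_succ (2 : ℝ) k, pow_pos (two_pos (α := ℝ)) k]

lemma pos (hc₀ : 0 ≤ c) (hc₁ : c ≤ 1) {j : ℕ} (hj : j ≤ m) : 0 < alphaB m j c :=
  (pow_pos (two_pos (α := ℝ)) j).trans_le (two_pow_le hc₀ hc₁ hj)

lemma strictMonoOn (hc₀ : 0 ≤ c) (hc₁ : c < 1) :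
    StrictMonoOn (fun j => alphaB m j c) (Set.Iic m) := by
  refine strictMonoOn_of_lt_add_one Set.ordConnected_Iic fun j _ _ hj => ?_
  rw [eq_add_mul_succ (Nat.lt_of_add_one_le hj)]
  nlinarith [pow_succ (2 : ℝ) j, pow_pos (two_pos (α := ℝ)) j, two_pow_le hc₀ hc₁.le hj]

lemma lt_average_Icc_succ (hc₀ : 0 ≤ c) (hc₁ : c < 1) {j : ℕ} (hj : j < m) :
    alphaB m j c < (∑ i ∈ Finset.Icc (j + 1) m, alphaB m i c) / ((m : ℝ) - j) := by
  have hcard : ((Finset.Icc (j + 1) m).card : ℝ) = (m : ℝ) - j := by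
    rw [Nat.card_Icc, Nat.add_sub_add_right, Nat.cast_sub hj.le]
  rw [lt_div_iff₀ (sub_pos.2 (by exact_mod_cast hj)),
    ← hcard, mul_comm, ← nsmul_eq_mul, ← Finset.sum_const]
  refine Finset.sum_lt_sum_of_nonempty (Finset.nonempty_Icc.2 hj) fun i hi => ?_
  obtain ⟨hji, him⟩ := Finset.mem_Icc.1 hi
  exact strictMonoOn hc₀ hc₁ (Set.mem_Iic.2 hj.le) (Set.mem_Iic.2 him) hji

end alphaB

lemma strictMonoOn_div_convexComb {κ a b : ℝ} (hκ : 0 < κ) (ha : 0 < a) (hab : a < b) :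
    StrictMonoOn (fun p => κ / (p * a + (1 - p) * b)) (Set.Icc 0 1) := by
  rintro p - q ⟨hq₀, hq₁⟩ hpq
  have hq_pos : 0 < q * a + (1 - q) * b := by nlinarith
  exact div_lt_div_of_pos_left hκ hq_pos (by nlinarith)

theorem tauRRC_strictMono_in_p0_general (m CWmin : ℕ) (hCW : 2 ≤ CWmin)
    (j : ℕ) (hj : j < m) (c : ℝ) (hc : c ∈ Set.Ico (0 : ℝ) 1) :
    StrictMonoOn (fun p0 => tauRRC m CWmin j p0 c) (Set.Icc 0 1) := by
  obtain ⟨hc₀, hc₁⟩ := hc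
  have hκ : 0 < kappa0 CWmin := div_pos two_pos (by exact_mod_cast (two_pos.trans_le hCW))
  have hτ : (fun p0 => tauRRC m CWmin j p0 c) = fun p => kappa0 CWmin / (p * alphaB m j c +
      (1 - p) * ((∑ i ∈ Finset.Icc (j + 1) m, alphaB m i c) / ((m : ℝ) - j))) := by
    funext p
    rw [tauRRC, div_mul_eq_mul_div, mul_div_assoc]
  rw [hτ]
  exact strictMonoOn_div_convexComb hκ (alphaB.pos hc₀ hc₁.le hj.le)
    (alphaB.lt_average_Icc_succ hc₀ hc₁ hj)

/-- For fixed `j ∈ {0,…,m-1}` and `c ∈ [0,1)`, the map `p₀ ↦ τ_c(j;p₀)` is strictly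
increasing on `[0,1]`. -/
theorem tauRRC_strictMono_in_p0 (m CWmin : ℕ) (hm : 1 ≤ m) (hCW : 2 ≤ CWmin)
    (j : ℕ) (hj : j < m) (c : ℝ) (hc : c ∈ Set.Ico (0 : ℝ) 1) :
    StrictMonoOn (fun p0 => tauRRC m CWmin j p0 c) (Set.Icc 0 1) :=
  tauRRC_strictMono_in_p0_general m CWmin hCW j hj c hc
end

section
/- For every reset distribution q and N ≥ 2, the fixed-point attempt probability satisfies τ̂(q) ∈ [τ(m−1;0), τ(0;1)], where τ(m−1;0) and τ(0;1) are the fixed-point attempt probabilities of the RandomReset(m−1;0) and RandomReset(0;1) policies respectively. -/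
open Finset

/-!
For `c ∈ [0,1]` the recursion `α_j = 2^j (1 - c) + c α_{j+1}` together with `α_{j+1} ≥ 2^{j+1}`
shows that `α_j(c)` increases with `j`, so the average `∑ q_j α_j(c)` lies between `α_0(c)` and
`α_m(c)`, the denominators of `τ_c(0;1)` and `τ_c(m-1;0)`. Each fixed-point equation reads
`τ α(1 - (1 - τ)^(N-1)) = κ_0`, and for `α = α_0, α_m` the left-hand side is strictly increasing in
`τ`, so comparing it at the three fixed points gives the claim. This monotonicity is not inherited
from `α` (`α_m` decreases in `c`, and `α_0` does too near `c = 1` when `m = 1`); it comes from the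
concavity of `c(τ) = 1 - (1 - τ)^(N-1)`, which gives `τ c'(τ) ≤ c(τ)`.
-/

section Alpha

variable {m : ℕ} {c : ℝ}

lemma alphaB_self : alphaB m m c = 2 ^ m * (2 - c) := by
  simp only [alphaB, Finset.Icc_self, sum_singleton, Nat.sub_self, pow_zero]
  ring

lemma alphaB_eq_of_lt {j : ℕ} (hj : j < m) :
    alphaB m j c = 2 ^ j * (1 - c) + c * alphaB m (j + 1) c := by
  have hsum : ∑ i ∈ Icc j m, (2 : ℝ) ^ i * c ^ (i - j)
      = 2 ^ j + c * ∑ i ∈ Icc (j + 1) m, (2 : ℝ) ^ i * c ^ (i - (j + 1)) := by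
    rw [← insert_Icc_add_one_left_eq_Icc hj.le, sum_insert (by simp), Nat.sub_self, pow_zero,
      mul_one, mul_sum]
    congr 1
    refine sum_congr rfl fun i hi => ?_
    rw [show i - j = i - (j + 1) + 1 by grind, pow_succ]
    ring
  rw [alphaB, alphaB, hsum, show m - j = m - (j + 1) + 1 by omega, pow_succ]
  ring

lemma two_pow_le_alphaB {j : ℕ} (hj : j ≤ m) (hc0 : 0 ≤ c) (hc1 : c ≤ 1) :
    (2 : ℝ) ^ j ≤ alphaB m j c := by
  induction hj using Nat.decreasingInduction with
  | self => rw [alphaB_self]; nlinarith [pow_pos (two_pos : (0 : ℝ) < 2) m]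
  | of_succ k hk ih =>
    have hk' : (2 : ℝ) ^ k ≤ alphaB m (k + 1) c := (pow_le_pow_right₀ one_le_two k.le_succ).trans ih
    rw [alphaB_eq_of_lt hk]
    nlinarith

lemma alphaB_le_alphaB {j k : ℕ} (hjk : j ≤ k) (hk : k ≤ m) (hc0 : 0 ≤ c) (hc1 : c ≤ 1) :
    alphaB m j c ≤ alphaB m k c := by
  induction k, hjk using Nat.le_induction with
  | base => rfl
  | succ k hjk ih =>
    have hk' : (2 : ℝ) ^ k ≤ alphaB m (k + 1) c :=
      (pow_le_pow_right₀ one_le_two k.le_succ).trans (two_pow_le_alphaB hk hc0 hc1)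
    calc alphaB m j c ≤ alphaB m k c := ih (by omega)
      _ = alphaB m (k + 1) c - (1 - c) * (alphaB m (k + 1) c - 2 ^ k) := by
        rw [alphaB_eq_of_lt hk]; ring
      _ ≤ alphaB m (k + 1) c := sub_le_self _ (mul_nonneg (by linarith) (by linarith))

/-- The grouping makes `τ` times each summand increasing in `τ` when `c = 1 - (1 - τ) ^ n`. -/
lemma alphaB_succ_zero (M : ℕ) (c : ℝ) :
    alphaB (M + 1) 0 c
      = 1 + ∑ k ∈ range M, 2 ^ k * c ^ (k + 1) + 2 ^ M * c ^ (M + 1) * (1 + 2 * (1 - c)) := by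
  rw [alphaB, ← Nat.range_succ_eq_Icc_zero]
  simp only [Nat.sub_zero]
  induction M with
  | zero => simp [sum_range_succ]; ring
  | succ M ih =>
    rw [sum_range_succ _ (M + 2), sum_range_succ _ M]
    linear_combination ih

end Alpha

lemma IsResetDist.sum_mul_mem_Icc {m : ℕ} {q : Fin (m + 1) → ℝ} (hq : IsResetDist m q)
    {f : Fin (m + 1) → ℝ} {a b : ℝ} (hf : ∀ j, f j ∈ Set.Icc a b) :
    ∑ j, q j * f j ∈ Set.Icc a b := by
  obtain ⟨hq0, hq1⟩ := hq
  constructor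
  · calc a = ∑ j, q j * a := by rw [← sum_mul, hq1, one_mul]
      _ ≤ ∑ j, q j * f j := sum_le_sum fun j _ => mul_le_mul_of_nonneg_left (hf j).1 (hq0 j)
  · calc ∑ j, q j * f j ≤ ∑ j, q j * b :=
          sum_le_sum fun j _ => mul_le_mul_of_nonneg_left (hf j).2 (hq0 j)
      _ = b := by rw [← sum_mul, hq1, one_mul]

lemma tauRRC_pred_zero {m : ℕ} (hm : 1 ≤ m) (CWmin : ℕ) (c : ℝ) :
    tauRRC m CWmin (m - 1) 0 c = kappa0 CWmin / alphaB m m c := by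
  rw [tauRRC, Nat.sub_add_cancel hm, Icc_self, sum_singleton, Nat.cast_sub hm]
  norm_num

lemma tauRRC_zero_one (m CWmin : ℕ) (c : ℝ) :
    tauRRC m CWmin 0 1 c = kappa0 CWmin / alphaB m 0 c := by
  simp [tauRRC]

lemma one_sub_one_sub_pow_mem_Icc {τ : ℝ} (hτ : τ ∈ Set.Icc (0 : ℝ) 1) (n : ℕ) :
    1 - (1 - τ) ^ n ∈ Set.Icc (0 : ℝ) 1 := by
  have h0 : 0 ≤ 1 - τ := by linarith [hτ.2]
  constructor
  · linarith [pow_le_one₀ h0 (by linarith [hτ.1] : 1 - τ ≤ 1) (n := n)]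
  · linarith [pow_nonneg h0 n]

lemma natCast_mul_one_sub_mul_pow_pred_le {s : ℝ} (hs0 : 0 ≤ s) (hs1 : s ≤ 1) (n : ℕ) :
    n * (1 - s) * s ^ (n - 1) ≤ 1 - s ^ n := by
  rw [← geom_sum_mul_of_le_one hs1, mul_comm _ (1 - s), mul_assoc, mul_comm (∑ i ∈ range n, s ^ i)]
  refine mul_le_mul_of_nonneg_left ?_ (by linarith)
  calc (n : ℝ) * s ^ (n - 1) = ∑ _i ∈ range n, s ^ (n - 1) := by simp
    _ ≤ ∑ i ∈ range n, s ^ i :=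
      sum_le_sum fun i hi => pow_le_pow_of_le_one hs0 hs1 (by grind)

lemma hasDerivAt_mul_pow_mul (n M : ℕ) (a τ : ℝ) :
    HasDerivAt (fun τ : ℝ => τ * (1 - (1 - τ) ^ n) ^ M * (1 + a * (1 - τ) ^ n))
      ((1 - (1 - τ) ^ n) ^ M * (1 + a * (1 - τ) ^ n) + τ * (n * (1 - τ) ^ (n - 1)) *
        (M * (1 - (1 - τ) ^ n) ^ (M - 1) * (1 + a * (1 - τ) ^ n) - a * (1 - (1 - τ) ^ n) ^ M))
      τ := by
  have hs : HasDerivAt (fun τ : ℝ => (1 - τ) ^ n) (n * (1 - τ) ^ (n - 1) * -1) τ := by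
    simpa using ((hasDerivAt_id' τ).const_sub 1).fun_pow n
  refine (((hasDerivAt_id' τ).mul ((hs.const_sub 1).fun_pow M)).mul
    ((hs.const_mul a).const_add 1)).congr_deriv ?_
  simp only [Pi.mul_apply]
  ring

lemma strictMonoOn_mul_pow_mul {n : ℕ} (hn : 1 ≤ n) (M : ℕ) {a : ℝ} (ha0 : 0 ≤ a)
    (ha : a ≤ M + 1) :
    StrictMonoOn (fun τ : ℝ => τ * (1 - (1 - τ) ^ n) ^ M * (1 + a * (1 - τ) ^ n))
      (Set.Icc 0 1) := by
  refine strictMonoOn_of_deriv_pos (convex_Icc 0 1) (by fun_prop) fun τ hτ => ?_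
  rw [interior_Icc] at hτ
  obtain ⟨hτ0, hτ1⟩ := hτ
  rw [(hasDerivAt_mul_pow_mul n M a τ).deriv]
  set s := 1 - τ with hs
  set c := 1 - s ^ n
  set t := τ * (n * s ^ (n - 1))
  set Y := M * c ^ (M - 1) * (1 + a * s ^ n) - a * c ^ M
  have hsn : 0 < s ^ n := pow_pos (by linarith) n
  have hc : 0 < c := by
    have := pow_lt_one₀ (by linarith) (by linarith : s < 1) (by omega : n ≠ 0)
    linarith
  have ht0 : 0 ≤ t := by positivity
  -- concavity of `τ ↦ 1 - (1 - τ) ^ n`, which vanishes at `0`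
  have htc : t ≤ c := by
    have := natCast_mul_one_sub_mul_pow_pred_le (by linarith : 0 ≤ s) (by linarith) n
    rw [hs, sub_sub_cancel] at this
    linarith
  have hcY : c * Y = c ^ M * (M * (1 + a * s ^ n) - a * c) := by
    rcases M with _ | M
    · simp only [Y]; push_cast; ring
    · simp only [Y, Nat.add_sub_cancel]; push_cast; ring
  rcases le_or_gt 0 Y with hY | hY
  · have : 0 < c ^ M * (1 + a * s ^ n) := by positivity
    nlinarith [mul_nonneg ht0 hY]
  · -- `c ^ M * (1 + a * s ^ n) + c * Y = c ^ M * ((M + 1 - a) + (M + 2) * a * s ^ n)`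
    have htY : c * Y ≤ t * Y := mul_le_mul_of_nonpos_right htc hY.le
    have h1 : 0 ≤ c ^ M * ((M + 1 - a) * (1 - s ^ n)) :=
      mul_nonneg (by positivity) (mul_nonneg (by linarith) hc.le)
    have h2 : 0 ≤ c ^ M * (a * s ^ n) := by positivity
    have h3 : 0 < c ^ M * ((M + 1) * s ^ n) := by positivity
    nlinarith

lemma strictMonoOn_mul_alphaB_self (m : ℕ) {n : ℕ} (hn : 1 ≤ n) :
    StrictMonoOn (fun τ : ℝ => τ * alphaB m m (1 - (1 - τ) ^ n)) (Set.Icc 0 1) := by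
  have hG : ∀ τ : ℝ, τ * alphaB m m (1 - (1 - τ) ^ n)
      = 2 ^ m * (τ * (1 - (1 - τ) ^ n) ^ 0 * (1 + 1 * (1 - τ) ^ n)) := fun τ => by
    rw [alphaB_self]; ring
  intro x hx y hy hxy
  simp only [hG]
  exact mul_lt_mul_of_pos_left (strictMonoOn_mul_pow_mul hn 0 zero_le_one (by norm_num) hx hy hxy)
    (by positivity)

lemma strictMonoOn_mul_alphaB_zero {m n : ℕ} (hm : 1 ≤ m) (hn : 1 ≤ n) :
    StrictMonoOn (fun τ : ℝ => τ * alphaB m 0 (1 - (1 - τ) ^ n)) (Set.Icc 0 1) := by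
  obtain ⟨M, rfl⟩ := Nat.exists_eq_add_of_le' hm
  set h := fun (k : ℕ) (a τ : ℝ) => τ * (1 - (1 - τ) ^ n) ^ k * (1 + a * (1 - τ) ^ n)
  have hG : ∀ τ : ℝ, τ * alphaB (M + 1) 0 (1 - (1 - τ) ^ n)
      = τ + ∑ k ∈ range M, 2 ^ k * h (k + 1) 0 τ + 2 ^ M * h (M + 1) 2 τ := fun τ => by
    simp only [alphaB_succ_zero, h, mul_add, mul_sum, sub_sub_cancel]
    ring_nf
  intro x hx y hy hxy
  have hmono : ∀ (k : ℕ) (a : ℝ), 0 ≤ a → a ≤ k + 1 → h k a x ≤ h k a y := fun k a ha0 ha =>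
    (strictMonoOn_mul_pow_mul hn k ha0 ha).monotoneOn hx hy hxy.le
  have hsum : ∑ k ∈ range M, 2 ^ k * h (k + 1) 0 x ≤ ∑ k ∈ range M, 2 ^ k * h (k + 1) 0 y :=
    sum_le_sum fun k _ =>
      mul_le_mul_of_nonneg_left (hmono (k + 1) 0 le_rfl (by positivity)) (by positivity)
  have hlast : 2 ^ M * h (M + 1) 2 x ≤ 2 ^ M * h (M + 1) 2 y :=
    mul_le_mul_of_nonneg_left (hmono (M + 1) 2 (by norm_num) (by push_cast; linarith))
      (by positivity)
  simp only [hG]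
  linarith

section FixedPoint

variable {m CWmin N : ℕ} {τ : ℝ}

lemma IsResetDist.sum_mul_alphaB_mem_Icc {q : Fin (m + 1) → ℝ} (hq : IsResetDist m q) {c : ℝ}
    (hc : c ∈ Set.Icc (0 : ℝ) 1) :
    ∑ j, q j * alphaB m j c ∈ Set.Icc (alphaB m 0 c) (alphaB m m c) :=
  hq.sum_mul_mem_Icc fun j =>
    ⟨alphaB_le_alphaB j.val.zero_le j.is_le hc.1 hc.2, alphaB_le_alphaB j.is_le le_rfl hc.1 hc.2⟩

lemma alphaB_pos {j : ℕ} (hj : j ≤ m) {c : ℝ} (hc : c ∈ Set.Icc (0 : ℝ) 1) :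
    0 < alphaB m j c :=
  (pow_pos two_pos j).trans_le (two_pow_le_alphaB hj hc.1 hc.2)

lemma IsFixedPointQ.mul_sum_eq {q : Fin (m + 1) → ℝ} (h : IsFixedPointQ m CWmin N q τ)
    (hq : IsResetDist m q) :
    τ * ∑ j, q j * alphaB m j (1 - (1 - τ) ^ (N - 1)) = kappa0 CWmin := by
  have hc := one_sub_one_sub_pow_mem_Icc h.1 (N - 1)
  have hpos := (alphaB_pos m.zero_le hc).trans_le (hq.sum_mul_alphaB_mem_Icc hc).1
  exact (eq_div_iff hpos.ne').1 h.2

lemma IsFixedPointRR.mul_alphaB_self_eq (hm : 1 ≤ m) (h : IsFixedPointRR m CWmin N (m - 1) 0 τ) :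
    τ * alphaB m m (1 - (1 - τ) ^ (N - 1)) = kappa0 CWmin := by
  have hpos := alphaB_pos (le_refl m) (one_sub_one_sub_pow_mem_Icc h.1 (N - 1))
  exact (eq_div_iff hpos.ne').1 (tauRRC_pred_zero hm CWmin _ ▸ h.2)

lemma IsFixedPointRR.mul_alphaB_zero_eq (h : IsFixedPointRR m CWmin N 0 1 τ) :
    τ * alphaB m 0 (1 - (1 - τ) ^ (N - 1)) = kappa0 CWmin := by
  have hpos := alphaB_pos m.zero_le (one_sub_one_sub_pow_mem_Icc h.1 (N - 1))
  exact (eq_div_iff hpos.ne').1 (tauRRC_zero_one m CWmin _ ▸ h.2)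

end FixedPoint

theorem fixedPoint_mem_RR_range_general (m CWmin N : ℕ) (hm : 1 ≤ m) (hN : 2 ≤ N)
    (q : Fin (m + 1) → ℝ) (hq : IsResetDist m q)
    (τq τlo τhi : ℝ)
    (hτq : IsFixedPointQ m CWmin N q τq)
    (hτlo : IsFixedPointRR m CWmin N (m - 1) 0 τlo)
    (hτhi : IsFixedPointRR m CWmin N 0 1 τhi) :
    τq ∈ Set.Icc τlo τhi := by
  have hn : 1 ≤ N - 1 := by omega
  have hα := hq.sum_mul_alphaB_mem_Icc (one_sub_one_sub_pow_mem_Icc hτq.1 (N - 1))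
  have hτq_eq := hτq.mul_sum_eq hq
  constructor
  · rw [← (strictMonoOn_mul_alphaB_self m hn).le_iff_le hτlo.1 hτq.1]
    calc τlo * alphaB m m (1 - (1 - τlo) ^ (N - 1)) = kappa0 CWmin := hτlo.mul_alphaB_self_eq hm
      _ = τq * ∑ j, q j * alphaB m j (1 - (1 - τq) ^ (N - 1)) := hτq_eq.symm
      _ ≤ τq * alphaB m m (1 - (1 - τq) ^ (N - 1)) := mul_le_mul_of_nonneg_left hα.2 hτq.1.1
  · rw [← (strictMonoOn_mul_alphaB_zero hm hn).le_iff_le hτq.1 hτhi.1]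
    calc τq * alphaB m 0 (1 - (1 - τq) ^ (N - 1))
        ≤ τq * ∑ j, q j * alphaB m j (1 - (1 - τq) ^ (N - 1)) :=
          mul_le_mul_of_nonneg_left hα.1 hτq.1.1
      _ = kappa0 CWmin := hτq_eq
      _ = τhi * alphaB m 0 (1 - (1 - τhi) ^ (N - 1)) := hτhi.mul_alphaB_zero_eq.symm

/-- For every reset distribution `q` and `N ≥ 2`, the fixed-point attempt probability
satisfies `τ̂(q) ∈ [τ(m-1;0), τ(0;1)]`, where `τ(m-1;0)` and `τ(0;1)` are the fixed-point
attempt probabilities of RandomReset(m-1;0) and RandomReset(0;1). -/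
theorem fixedPoint_mem_RR_range (m CWmin N : ℕ) (hm : 1 ≤ m) (hCW : 2 ≤ CWmin) (hN : 2 ≤ N)
    (q : Fin (m + 1) → ℝ) (hq : IsResetDist m q)
    (τq τlo τhi : ℝ)
    (hτq : IsFixedPointQ m CWmin N q τq)
    (hτlo : IsFixedPointRR m CWmin N (m - 1) 0 τlo)
    (hτhi : IsFixedPointRR m CWmin N 0 1 τhi) :
    τq ∈ Set.Icc τlo τhi :=
  fixedPoint_mem_RR_range_general m CWmin N hm hN q hq τq τlo τhi hτq hτlo hτhi
end
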